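/- For any two real diagonal N×N matrices Λ and Λ_o, both with non-increasing diagonal entries, and any orthogonal matrix V, one has ‖Λ − Λ_o‖_F ≤ ‖Λ − V Λ_o Vᵀ‖_F (a trace/rearrangement inequality: tr(Λ V Λ_o Vᵀ) ≤ tr(Λ Λ_o)). -/

import Mathlib

/-!
Write `Λ = diagonal d`, `Λ_o = diagonal λ` and `P = V ⊙ V`, which is doubly stochastic because
`V` is orthogonal. Then `tr(Λ V Λ_o Vᵀ) = d ⬝ᵥ (P *ᵥ λ)` is linear in `P`, and by Birkhoff's
theorem `P` is a convex combination of permutation matrices, on each of which the bound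
`d ⬝ᵥ λ` is the rearrangement inequality for two non-increasing sequences. Orthogonal invariance gives
`‖Λ - V Λ_o Vᵀ‖_F² = ‖Λ‖_F² - 2 tr(Λ V Λ_o Vᵀ) + ‖Λ_o‖_F²`, so the Frobenius inequality is
the trace inequality again (the left side being the case `V = 1`).
-/

open Matrix

noncomputable def frobNorm {N : ℕ} (A : Matrix (Fin N) (Fin N) ℝ) : ℝ :=
  Real.sqrt (∑ i, ∑ j, (A i j) ^ 2)

namespace Matrix

variable {n R : Type*} [Fintype n] [DecidableEq n]

theorem dotProduct_mulVec_le_of_mem_doublyStochastic [Field R] [LinearOrder R]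
    [IsStrictOrderedRing R] {P : Matrix n n R} (hP : P ∈ doublyStochastic R n)
    {a b : n → R} (hab : Monovary a b) : a ⬝ᵥ (P *ᵥ b) ≤ a ⬝ᵥ b := by
  have hperm (σ : Equiv.Perm n) : a ⬝ᵥ (σ.permMatrix R *ᵥ b) ≤ a ⬝ᵥ b := by
    simpa [permMatrix_mulVec, dotProduct] using hab.sum_mul_comp_perm_le_sum_mul
  have hconvex : Convex R {P : Matrix n n R | a ⬝ᵥ (P *ᵥ b) ≤ a ⬝ᵥ b} :=
    convex_halfSpace_le ⟨fun P Q ↦ by simp [add_mulVec, dotProduct_add],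
      fun c P ↦ by simp [smul_mulVec, dotProduct_smul]⟩ _
  rw [← SetLike.mem_coe, doublyStochastic_eq_convexHull_permMatrix] at hP
  exact convexHull_min (by rintro _ ⟨σ, rfl⟩; exact hperm σ) hconvex hP

theorem hadamard_self_mem_doublyStochastic [CommRing R] [LinearOrder R] [IsStrictOrderedRing R]
    {V : Matrix n n R} (hV : V ∈ orthogonalGroup n R) : V ⊙ V ∈ doublyStochastic R n := by
  have hrow (i : n) : ∑ j, V i j * V i j = 1 := by
    simpa [mul_apply] using congr_fun₂ ((mem_orthogonalGroup_iff n R).1 hV) i i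
  have hcol (j : n) : ∑ i, V i j * V i j = 1 := by
    simpa [mul_apply] using congr_fun₂ ((mem_orthogonalGroup_iff' n R).1 hV) j j
  exact (mem_doublyStochastic_iff_sum).2 ⟨fun i j ↦ mul_self_nonneg _, hrow, hcol⟩

theorem trace_diagonal_mul_conj [CommRing R] (d l : n → R) (V : Matrix n n R) :
    trace (diagonal d * (V * diagonal l * Vᵀ)) = d ⬝ᵥ ((V ⊙ V) *ᵥ l) := by
  simp only [trace, diag, diagonal_mul]
  simp only [mul_apply, transpose_apply, diagonal_apply, mul_ite, mul_zero, Finset.sum_ite_eq',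
    Finset.mem_univ, if_true, dotProduct, mulVec, hadamard_apply, Finset.mul_sum]
  exact Finset.sum_congr rfl fun i _ ↦ Finset.sum_congr rfl fun j _ ↦ by ring

omit [DecidableEq n] in
theorem trace_sub_mul_transpose_sub_of_isSymm [CommRing R] {A B : Matrix n n R}
    (hA : A.IsSymm) (hB : B.IsSymm) :
    trace ((A - B) * (A - B)ᵀ) = trace (A * A) - 2 * trace (A * B) + trace (B * B) := by
  rw [transpose_sub, hA.eq, hB.eq, sub_mul, mul_sub, mul_sub, trace_sub, trace_sub, trace_sub,
    trace_mul_comm B A]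
  ring

theorem isSymm_conj_diagonal [CommRing R] (l : n → R) (V : Matrix n n R) :
    (V * diagonal l * Vᵀ).IsSymm := by
  simp [IsSymm, transpose_mul, Matrix.mul_assoc]

theorem trace_conj_mul_conj [CommRing R] {V : Matrix n n R} (hV : Vᵀ * V = 1)
    (A B : Matrix n n R) : trace (V * A * Vᵀ * (V * B * Vᵀ)) = trace (A * B) := by
  rw [show V * A * Vᵀ * (V * B * Vᵀ) = V * (A * (Vᵀ * V) * B * Vᵀ) by
      simp only [Matrix.mul_assoc],
    hV, Matrix.mul_one, trace_mul_comm, Matrix.mul_assoc, Matrix.mul_assoc, hV, Matrix.mul_one]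

end Matrix

theorem frobNorm_eq_sqrt_trace {N : ℕ} (A : Matrix (Fin N) (Fin N) ℝ) :
    frobNorm A = √(trace (A * Aᵀ)) := by
  simp [frobNorm, trace, mul_apply, sq]

theorem frobNorm_diagonal_sub_conj {N : ℕ} (d l : Fin N → ℝ) {V : Matrix (Fin N) (Fin N) ℝ}
    (hV : V ∈ orthogonalGroup (Fin N) ℝ) :
    frobNorm (diagonal d - V * diagonal l * Vᵀ) =
      √(d ⬝ᵥ d - 2 * trace (diagonal d * (V * diagonal l * Vᵀ)) + l ⬝ᵥ l) := by
  rw [frobNorm_eq_sqrt_trace, trace_sub_mul_transpose_sub_of_isSymm (isSymm_diagonal d)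
    (isSymm_conj_diagonal l V), trace_conj_mul_conj ((mem_orthogonalGroup_iff' _ _).1 hV)]
  simp [diagonal_mul_diagonal, trace_diagonal, dotProduct]

/-- Rearrangement/trace inequality: for diagonal `Λ`, `Λ_o` with non-increasing
diagonals and any orthogonal `V`, `‖Λ − Λ_o‖_F ≤ ‖Λ − V Λ_o Vᵀ‖_F`,
equivalently `tr(Λ V Λ_o Vᵀ) ≤ tr(Λ Λ_o)`. -/
theorem diagonal_rearrangement_inequality {N : ℕ}
    (d Λo : Fin N → ℝ)
    (hd : ∀ i j : Fin N, i ≤ j → d j ≤ d i)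
    (hΛo : ∀ i j : Fin N, i ≤ j → Λo j ≤ Λo i)
    (V : Matrix (Fin N) (Fin N) ℝ) (hV : V ∈ Matrix.orthogonalGroup (Fin N) ℝ) :
    frobNorm (Matrix.diagonal d - Matrix.diagonal Λo) ≤
        frobNorm (Matrix.diagonal d - V * Matrix.diagonal Λo * Vᵀ) ∧
      Matrix.trace (Matrix.diagonal d * (V * Matrix.diagonal Λo * Vᵀ)) ≤
        Matrix.trace (Matrix.diagonal d * Matrix.diagonal Λo) := by
  have htrace :
      trace (diagonal d * (V * diagonal Λo * Vᵀ)) ≤ trace (diagonal d * diagonal Λo) := by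
    rw [trace_diagonal_mul_conj, diagonal_mul_diagonal, trace_diagonal]
    exact dotProduct_mulVec_le_of_mem_doublyStochastic (hadamard_self_mem_doublyStochastic hV)
      (Antitone.monovary hd hΛo)
  refine ⟨?_, htrace⟩
  have h1 : frobNorm (diagonal d - diagonal Λo) =
      √(d ⬝ᵥ d - 2 * trace (diagonal d * diagonal Λo) + Λo ⬝ᵥ Λo) := by
    simpa using frobNorm_diagonal_sub_conj d Λo (one_mem (orthogonalGroup (Fin N) ℝ))
  rw [h1, frobNorm_diagonal_sub_conj d Λo hV]
  gcongr
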